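/- Let ρ : ℝ → (−∞, +∞] be an even function bounded from below, and define g : ℝ³ → (−∞, +∞] by g(v) = ρ(|v|). Then for every v ∈ ℝ³, sup { φ(v) : φ : ℝ³ → ℝ convex, φ(w) ≤ g(w) for all w ∈ ℝ³ } = sup { ψ(|v|) : ψ : ℝ → ℝ convex, ψ(t) ≤ ρ(t) for all t ∈ ℝ }; that is, the convex envelope of the radial function g is the radial function whose profile is the convex envelope of ρ. -/

import Mathlib

/-!
A convex minorant `φ` of `ρ ∘ ‖·‖`, restricted to the line `t ↦ t • e` through a unit vector `e`
with `v = ‖v‖ • e`, is a convex minorant of the even function `ρ` taking the value `φ v` at `‖v‖`.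
Conversely a convex minorant `ψ` of `ρ` is dominated by the even convex minorant
`χ t = max (ψ t) (ψ (-t))`; an even convex function is nondecreasing on `[0, ∞)`, so `χ ∘ ‖·‖` is
convex by the triangle inequality, and it is a minorant of `ρ ∘ ‖·‖`. The two sets of values are
thus cofinal in each other, so their suprema agree.
-/

noncomputable section

/-- The Euclidean norm on `ℝ³`. -/
def enr (v : Fin 3 → ℝ) : ℝ := Real.sqrt (∑ i, (v i) ^ 2)

open Set

/-- Real-valued, so `sSup` gives the junk value `0` when `g` has no convex minorant or their
values at `v` are unbounded. -/
def convexEnvelope {E : Type*} [AddCommGroup E] [Module ℝ E] (g : E → EReal) (v : E) : ℝ :=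
  sSup {y : ℝ | ∃ φ : E → ℝ, ConvexOn ℝ univ φ ∧ (∀ w, (φ w : EReal) ≤ g w) ∧ y = φ v}

lemma convexEnvelope_comp_linearEquiv {E F : Type*} [AddCommGroup E] [Module ℝ E]
    [AddCommGroup F] [Module ℝ F] (g : E → EReal) (T : F ≃ₗ[ℝ] E) (v : F) :
    convexEnvelope (g ∘ T) v = convexEnvelope g (T v) := by
  unfold convexEnvelope
  congr 1
  ext y
  constructor
  · rintro ⟨φ, hφ, hle, rfl⟩
    refine ⟨φ ∘ T.symm, hφ.comp_linearMap T.symm.toLinearMap, fun w => ?_, by simp⟩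
    simpa using hle (T.symm w)
  · rintro ⟨φ, hφ, hle, rfl⟩
    exact ⟨φ ∘ T, hφ.comp_linearMap T.toLinearMap, fun w => hle (T w), rfl⟩

lemma Function.Even.apply_abs {β : Type*} {f : ℝ → β} (hf : Function.Even f) (t : ℝ) :
    f |t| = f t := by
  rcases abs_choice t with h | h <;> rw [h]
  exact hf t

lemma ConvexOn.comp_smul_right {E : Type*} [AddCommGroup E] [Module ℝ E] {f : E → ℝ}
    (hf : ConvexOn ℝ univ f) (e : E) : ConvexOn ℝ univ (fun t : ℝ => f (t • e)) :=
  hf.comp_linearMap (LinearMap.toSpanSingleton ℝ E e)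

lemma ConvexOn.max_comp_neg {f : ℝ → ℝ} (hf : ConvexOn ℝ univ f) :
    ConvexOn ℝ univ (fun t => max (f t) (f (-t))) :=
  hf.sup (hf.comp_linearMap (-LinearMap.id))

lemma ConvexOn.monotoneOn_Ici_of_even {f : ℝ → ℝ} (hf : ConvexOn ℝ univ f)
    (heven : Function.Even f) : MonotoneOn f (Ici 0) := by
  intro s (hs : 0 ≤ s) t _ hst
  have hmem : s ∈ segment ℝ (-t) t := by
    rw [segment_eq_Icc (by linarith)]
    exact ⟨by linarith, hst⟩
  simpa [heven t] using hf.le_on_segment trivial trivial hmem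

lemma ConvexOn.comp_norm {E : Type*} [SeminormedAddCommGroup E] [NormedSpace ℝ E] {f : ℝ → ℝ}
    (hf : ConvexOn ℝ (Ici 0) f) (hmono : MonotoneOn f (Ici 0)) :
    ConvexOn ℝ univ (fun x : E => f ‖x‖) := by
  refine ⟨convex_univ, fun x _ y _ a b ha hb hab => ?_⟩
  calc f ‖a • x + b • y‖ ≤ f (a * ‖x‖ + b * ‖y‖) := by
        refine hmono (norm_nonneg _) (mem_Ici.2 (by positivity)) ?_
        simpa [norm_smul, abs_of_nonneg ha, abs_of_nonneg hb] using norm_add_le (a • x) (b • y)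
    _ ≤ a • f ‖x‖ + b • f ‖y‖ := hf.2 (norm_nonneg x) (norm_nonneg y) ha hb hab

lemma exists_norm_eq_one_smul_eq {E : Type*} [NormedAddCommGroup E] [NormedSpace ℝ E]
    [Nontrivial E] (v : E) : ∃ e : E, ‖e‖ = 1 ∧ ‖v‖ • e = v := by
  rcases eq_or_ne v 0 with rfl | hv
  · obtain ⟨e, he⟩ := exists_norm_eq E zero_le_one
    exact ⟨e, he, by simp⟩
  · refine ⟨‖v‖⁻¹ • v, norm_smul_inv_norm hv, ?_⟩
    rw [smul_smul, mul_inv_cancel₀ (norm_ne_zero_iff.2 hv), one_smul]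

theorem convexEnvelope_comp_norm {E : Type*} [NormedAddCommGroup E] [NormedSpace ℝ E]
    [Nontrivial E] {ρ : ℝ → EReal} (heven : Function.Even ρ) (v : E) :
    convexEnvelope (fun w : E => ρ ‖w‖) v = convexEnvelope ρ ‖v‖ := by
  apply csSup_eq_csSup_of_forall_exists_le
  · rintro _ ⟨φ, hφ, hle, rfl⟩
    obtain ⟨e, he, hve⟩ := exists_norm_eq_one_smul_eq v
    refine ⟨φ v, ⟨fun t => φ (t • e), hφ.comp_smul_right e, fun t => ?_, by simp only [hve]⟩,
      le_rfl⟩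
    simpa [norm_smul, he, heven.apply_abs] using hle (t • e)
  · rintro _ ⟨ψ, hψ, hle, rfl⟩
    set χ := fun t => max (ψ t) (ψ (-t))
    have hχ : ConvexOn ℝ univ χ := hψ.max_comp_neg
    have hχeven : Function.Even χ := fun t => by simp only [χ, neg_neg, max_comm]
    have hχle : ∀ t, (χ t : EReal) ≤ ρ t := fun t => by
      rcases max_choice (ψ t) (ψ (-t)) with h | h <;> simp only [χ, h]
      · exact hle t
      · exact heven t ▸ hle (-t)
    refine ⟨χ ‖v‖, ⟨fun w => χ ‖w‖, ?_, fun w => hχle ‖w‖, rfl⟩, le_max_left _ _⟩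
    exact (hχ.subset (subset_univ _) (convex_Ici 0)).comp_norm
      (hχ.monotoneOn_Ici_of_even hχeven)

lemma enr_eq_norm (w : Fin 3 → ℝ) : enr w = ‖(WithLp.linearEquiv 2 ℝ (Fin 3 → ℝ)).symm w‖ := by
  simp [enr, EuclideanSpace.norm_eq]

theorem stmt15 (ρ : ℝ → EReal) (heven : ∀ t : ℝ, ρ (-t) = ρ t) :
    ∀ v : Fin 3 → ℝ,
      sSup {y : ℝ | ∃ φ : (Fin 3 → ℝ) → ℝ, ConvexOn ℝ Set.univ φ ∧
          (∀ w : Fin 3 → ℝ, ((φ w : ℝ) : EReal) ≤ ρ (enr w)) ∧ y = φ v}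
        = sSup {y : ℝ | ∃ ψ : ℝ → ℝ, ConvexOn ℝ Set.univ ψ ∧
            (∀ t : ℝ, ((ψ t : ℝ) : EReal) ≤ ρ t) ∧ y = ψ (enr v)} := by
  intro v
  simp only [enr_eq_norm]
  change convexEnvelope ((fun x : EuclideanSpace ℝ (Fin 3) => ρ ‖x‖) ∘ _) v = convexEnvelope ρ _
  rw [convexEnvelope_comp_linearEquiv, convexEnvelope_comp_norm heven]
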